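/- Let W be a Weyl group of rank n with Coxeter number h and N = nh/2 positive roots. Suppose L is a graded vector space whose graded character at w ∈ W is ch_L(w,t) = t^{-N} det(1 - t^{h+1} w)/det(1 - t w) (an element of C[t,t^{-1}] for each w). Then the Hilbert series of L (character at w = 1) is t^{-N}(1+t+...+t^h)^n, its dimension is (h+1)^n, and ch_L(w,1) = (h+1)^{dim ker(1-w)} when ord(w) is coprime to h+1. -/

import Mathlib

/-!
Since `w ^ m = 1`, `w` is diagonalizable, so the multiplicity of `1` as a root of
`det (1 - t w)` (the reversed characteristic polynomial of `w`) is `dim ker (1 - w)`.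
Writing `det (1 - t w) = (1 - t) ^ k Q(t)` with `Q(1) ≠ 0`, the character becomes
`(1 + t + ⋯ + t ^ h) ^ k Q(t ^ (h + 1)) / Q(t)`, continuous at `t = 1` with value `(h + 1) ^ k`.
For `w = 1` the quotient is exactly `((1 - t ^ (h + 1)) / (1 - t)) ^ n`.
-/

open Module Matrix Finset Filter

namespace Polynomial

theorem reverse_pow_of_domain {R : Type*} [Semiring R] [NoZeroDivisors R] (p : R[X]) (n : ℕ) :
    (p ^ n).reverse = p.reverse ^ n := by
  induction n with
  | zero => simpa using reverse_C (1 : R)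
  | succ n ih => rw [pow_succ, reverse_mul_of_domain, ih, pow_succ]

theorem rootMultiplicity_reverse {K : Type*} [Field K] (p : K[X]) {μ : K}
    (hμ : μ ≠ 0) : p.reverse.rootMultiplicity μ = p.rootMultiplicity μ⁻¹ := by
  rcases eq_or_ne p 0 with rfl | hp
  · simp
  obtain ⟨q, hpq, hq⟩ := p.exists_eq_pow_rootMultiplicity_mul_and_not_dvd hp μ⁻¹
  set k := p.rootMultiplicity μ⁻¹
  have hrev : (X - C μ⁻¹).reverse = C (-μ⁻¹) * (X - C μ) := by
    have hX : (X : K[X]).reverse = 1 := by rw [← mul_one X, reverse_X_mul, ← C_1, reverse_C]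
    rw [sub_eq_add_neg, ← C_neg, reverse_add_C, hX, natDegree_X, pow_one, mul_sub, ← C_mul,
      neg_mul, inv_mul_cancel₀ hμ, C_neg, C_neg, C_1]
    ring
  have hq' : ¬ q.reverse.IsRoot μ := by
    have : Invertible μ⁻¹ := invertibleOfNonzero (inv_ne_zero hμ)
    have hroot := eval₂_reverse_eq_zero_iff (RingHom.id K) μ⁻¹ q
    simp only [invOf_eq_inv, inv_inv, eval₂_id] at hroot
    rwa [IsRoot, hroot, ← IsRoot, ← dvd_iff_isRoot]
  have hne : C ((-μ⁻¹) ^ k) * ((X - C μ) ^ k * q.reverse) ≠ 0 :=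
    mul_ne_zero (by simp [hμ]) <|
      mul_ne_zero (pow_ne_zero _ (X_sub_C_ne_zero μ)) fun h ↦ hq' (by simp [h])
  rw [hpq, reverse_mul_of_domain, reverse_pow_of_domain, hrev, mul_pow, ← C_pow, mul_assoc,
    rootMultiplicity_mul hne, rootMultiplicity_C, rootMultiplicity_mul (right_ne_zero_of_mul hne),
    rootMultiplicity_X_sub_C_pow, rootMultiplicity_eq_zero hq', zero_add, add_zero]

open Topology in
theorem tendsto_eval_pow_div_eval_nhdsNE_one {𝕜 : Type*} [NormedField 𝕜] {P : 𝕜[X]}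
    (hP : P ≠ 0) (d : ℕ) :
    Tendsto (fun s ↦ P.eval (s ^ d) / P.eval s) (𝓝[≠] 1) (𝓝 ((d : 𝕜) ^ P.rootMultiplicity 1)) := by
  obtain ⟨q, hPq, hq⟩ := P.exists_eq_pow_rootMultiplicity_mul_and_not_dvd hP 1
  set k := P.rootMultiplicity 1
  have hq1 : q.eval 1 ≠ 0 := by rwa [dvd_iff_isRoot] at hq
  set g : 𝕜 → 𝕜 := fun s ↦ (∑ i ∈ range d, s ^ i) ^ k * (q.eval (s ^ d) / q.eval s)
  have hg : ContinuousAt g 1 := by fun_prop (disch := simpa using hq1)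
  have heq : (fun s ↦ P.eval (s ^ d) / P.eval s) =ᶠ[𝓝[≠] 1] g := by
    filter_upwards [self_mem_nhdsWithin] with s hs
    have hs' : (s - 1) ^ k ≠ 0 := pow_ne_zero _ (sub_ne_zero.mpr hs)
    simp only [g, hPq, eval_mul, eval_pow, eval_sub, eval_X, eval_C, ← mul_geom_sum, mul_pow,
      mul_assoc, mul_div_mul_left _ _ hs', mul_div_assoc]
  simpa [g, hq1] using (hg.tendsto.mono_left nhdsWithin_le_nhds).congr' heq.symm

end Polynomial

namespace Module.End

variable {K M : Type*} [Field K] [AddCommGroup M] [Module K M]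

theorem isSemisimple_of_pow_eq_one [CharZero K] {f : End K M} {m : ℕ} (hm : m ≠ 0)
    (hf : f ^ m = 1) : f.IsSemisimple :=
  isSemisimple_of_squarefree_aeval_eq_zero
    (Polynomial.X_pow_sub_one_separable_iff.mpr (by exact_mod_cast hm)).squarefree (by simp [hf])

theorem IsSemisimple.finrank_eigenspace_eq_rootMultiplicity [FiniteDimensional K M]
    {f : End K M} (hf : f.IsSemisimple) (μ : K) :
    finrank K (f.eigenspace μ) = f.charpoly.rootMultiplicity μ := by
  rw [← hf.isFinitelySemisimple.maxGenEigenspace_eq_eigenspace,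
    LinearMap.finrank_maxGenEigenspace_eq]

end Module.End

namespace Matrix

variable {n : Type*} [Fintype n] [DecidableEq n]

theorem det_one_sub_smul_one {R : Type*} [CommRing R] (b : R) :
    det (1 - b • (1 : Matrix n n R)) = (1 - b) ^ Fintype.card n := by
  rw [show (1 : Matrix n n R) - b • 1 = (1 - b) • 1 by rw [sub_smul, one_smul], det_smul, det_one,
    mul_one]

theorem det_one_sub_smul_eq_eval_charpolyRev {R : Type*} [CommRing R] (M : Matrix n n R)
    (t : R) : det (1 - t • M) = M.charpolyRev.eval t := by
  rw [charpolyRev, ← Polynomial.coe_evalRingHom, RingHom.map_det]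
  congr 1
  ext i j
  simp [one_apply, apply_ite, mul_comm t]

theorem finrank_ker_one_sub_eq_rootMultiplicity_charpolyRev {K : Type*} [Field K] [CharZero K]
    {w : Matrix n n K} {m : ℕ} (hm : m ≠ 0) (hw : w ^ m = 1) :
    finrank K (LinearMap.ker (toLin' (1 - w))) = w.charpolyRev.rootMultiplicity 1 := by
  have hs : Module.End.IsSemisimple (toLin' w) :=
    Module.End.isSemisimple_of_pow_eq_one hm
      (show toLinAlgEquiv' w ^ m = 1 by rw [← map_pow, hw, map_one])
  rw [← reverse_charpoly, Polynomial.rootMultiplicity_reverse _ one_ne_zero, inv_one,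
    ← charpoly_toLin', ← hs.finrank_eigenspace_eq_rootMultiplicity, Module.End.eigenspace_def,
    one_smul, map_sub, toLin'_one, ← Module.End.one_eq_id, ← LinearMap.ker_neg, neg_sub]

end Matrix

set_option synthInstance.maxHeartbeats 1000000 in
theorem graded_character_properties_general (n h N : ℕ) :
    ((RatFunc.X : RatFunc ℂ) ^ (-(N : ℤ)) *
        (Matrix.det ((1 : Matrix (Fin n) (Fin n) (RatFunc ℂ)) -
            ((RatFunc.X : RatFunc ℂ) ^ (h + 1)) • (1 : Matrix (Fin n) (Fin n) (RatFunc ℂ))) /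
          Matrix.det ((1 : Matrix (Fin n) (Fin n) (RatFunc ℂ)) -
            (RatFunc.X : RatFunc ℂ) • (1 : Matrix (Fin n) (Fin n) (RatFunc ℂ))))
      = (RatFunc.X : RatFunc ℂ) ^ (-(N : ℤ)) *
          (∑ k ∈ Finset.range (h + 1), (RatFunc.X : RatFunc ℂ) ^ k) ^ n) ∧
    (((∑ k ∈ Finset.range (h + 1), (Polynomial.X : Polynomial ℂ) ^ k) ^ n).eval 1
      = ((h : ℂ) + 1) ^ n) ∧
    ∀ (w : Matrix (Fin n) (Fin n) ℂ) (m : ℕ), 0 < m → w ^ m = 1 → Nat.Coprime m (h + 1) →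
      Filter.Tendsto
        (fun t : ℂ => Matrix.det ((1 : Matrix (Fin n) (Fin n) ℂ) - t ^ (h + 1) • w) /
          Matrix.det ((1 : Matrix (Fin n) (Fin n) ℂ) - t • w))
        (nhdsWithin 1 {(1 : ℂ)}ᶜ)
        (nhds (((h : ℂ) + 1) ^
          (finrank ℂ (LinearMap.ker (Matrix.toLin' ((1 : Matrix (Fin n) (Fin n) ℂ) - w)))))) := by
  refine ⟨?_, by simp [Polynomial.eval_finsetSum], ?_⟩
  · have hX : (RatFunc.X : RatFunc ℂ) ≠ 1 := fun h ↦ by simpa using congrArg RatFunc.intDegree h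
    rw [det_one_sub_smul_one, det_one_sub_smul_one, ← div_pow, Fintype.card_fin, geom_sum_eq hX,
      ← neg_div_neg_eq, neg_sub, neg_sub]
  · intro w m hm hw _
    have hP : w.charpolyRev ≠ 0 := fun h ↦ by simpa [h] using w.eval_charpolyRev
    simp_rw [det_one_sub_smul_eq_eval_charpolyRev,
      finrank_ker_one_sub_eq_rootMultiplicity_charpolyRev hm.ne' hw]
    exact_mod_cast Polynomial.tendsto_eval_pow_div_eval_nhdsNE_one hP (h + 1)

set_option synthInstance.maxHeartbeats 1000000 in
/-- Properties of a graded vector space `L` whose graded character at `w` is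
`t^{-N} det(1-t^{h+1}w)/det(1-tw)`: its Hilbert series (the character at `w = 1`)
is `t^{-N}(1+t+⋯+t^h)^n`, its dimension is `(h+1)^n`, and its character value at
any `w` of order coprime to `h+1` is `(h+1)^{dim ker(1-w)}`. -/
theorem graded_character_properties (n h N : ℕ) (hn : 0 < n) (hh : 0 < h)
    (hN : 2 * N = n * h) :
    ((RatFunc.X : RatFunc ℂ) ^ (-(N : ℤ)) *
        (Matrix.det ((1 : Matrix (Fin n) (Fin n) (RatFunc ℂ)) -
            ((RatFunc.X : RatFunc ℂ) ^ (h + 1)) • (1 : Matrix (Fin n) (Fin n) (RatFunc ℂ))) /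
          Matrix.det ((1 : Matrix (Fin n) (Fin n) (RatFunc ℂ)) -
            (RatFunc.X : RatFunc ℂ) • (1 : Matrix (Fin n) (Fin n) (RatFunc ℂ))))
      = (RatFunc.X : RatFunc ℂ) ^ (-(N : ℤ)) *
          (∑ k ∈ Finset.range (h + 1), (RatFunc.X : RatFunc ℂ) ^ k) ^ n) ∧
    (((∑ k ∈ Finset.range (h + 1), (Polynomial.X : Polynomial ℂ) ^ k) ^ n).eval 1
      = ((h : ℂ) + 1) ^ n) ∧
    ∀ (w : Matrix (Fin n) (Fin n) ℂ) (m : ℕ), 0 < m → w ^ m = 1 → Nat.Coprime m (h + 1) →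
      Filter.Tendsto
        (fun t : ℂ => Matrix.det ((1 : Matrix (Fin n) (Fin n) ℂ) - t ^ (h + 1) • w) /
          Matrix.det ((1 : Matrix (Fin n) (Fin n) ℂ) - t • w))
        (nhdsWithin 1 {(1 : ℂ)}ᶜ)
        (nhds (((h : ℂ) + 1) ^
          (finrank ℂ (LinearMap.ker (Matrix.toLin' ((1 : Matrix (Fin n) (Fin n) ℂ) - w)))))) :=
  graded_character_properties_general n h N
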